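/- arXiv:2411.06942 — 2 statements merged into one kernel-verified Lean document; each statement's English description precedes it below -/
import Mathlib

section
/- Let R = (M_{1,1}(E), *). For all symmetric degree-1 elements u_1, u_2 ∈ R_1^+ and skew degree-1 element w ∈ R_1^-, one has u_1 w u_2 + u_2 w u_1 = 0. Dually, for all w_1, w_2 ∈ R_1^- and u ∈ R_1^+, w_1 u w_2 + w_2 u w_1 = 0. -/
set_option maxHeartbeats 1000000


noncomputable section

/-- The infinite-dimensional Grassmann (exterior) algebra over `K` on a countably
infinite-dimensional vector space. -/
abbrev GrassmannE (K : Type) [Field K] := ExteriorAlgebra K (ℕ →₀ K)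

/-- The even part `E₀` of the Grassmann algebra. -/
def E0 (K : Type) [Field K] : Submodule K (GrassmannE K) :=
  CliffordAlgebra.evenOdd (0 : QuadraticForm K (ℕ →₀ K)) 0

/-- The odd part `E₁` of the Grassmann algebra. -/
def E1 (K : Type) [Field K] : Submodule K (GrassmannE K) :=
  CliffordAlgebra.evenOdd (0 : QuadraticForm K (ℕ →₀ K)) 1

open Matrix

/-- `M_{1,1}(E)`: 2×2 matrices with diagonal entries in `E₀` and off-diagonal entries in `E₁`. -/
def M11E (K : Type) [Field K] : Set (Matrix (Fin 2) (Fin 2) (GrassmannE K)) :=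
  {x | x 0 0 ∈ E0 K ∧ x 1 1 ∈ E0 K ∧ x 0 1 ∈ E1 K ∧ x 1 0 ∈ E1 K}

/-- The involution `*` on `M_{1,1}(E)` sending `!![a,b;c,d]` to `!![d,b;-c,a]`. -/
def mstar (K : Type) [Field K] (x : Matrix (Fin 2) (Fin 2) (GrassmannE K)) :
    Matrix (Fin 2) (Fin 2) (GrassmannE K) :=
  !![x 1 1, x 0 1; -(x 1 0), x 0 0]

/-- Degree-0 elements of `M_{1,1}(E)`: the diagonal matrices. -/
def IsDeg0 {K : Type} [Field K] (x : Matrix (Fin 2) (Fin 2) (GrassmannE K)) : Prop :=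
  x 0 1 = 0 ∧ x 1 0 = 0

/-- Degree-1 elements of `M_{1,1}(E)`: the off-diagonal matrices. -/
def IsDeg1 {K : Type} [Field K] (x : Matrix (Fin 2) (Fin 2) (GrassmannE K)) : Prop :=
  x 0 0 = 0 ∧ x 1 1 = 0

/-- `R₀⁺ = {diag(a,a) : a ∈ E₀}`. -/
def R0plus (K : Type) [Field K] : Set (Matrix (Fin 2) (Fin 2) (GrassmannE K)) :=
  {x | ∃ a ∈ E0 K, x = !![a, 0; 0, a]}

/-- `R₀⁻ = {diag(a,-a) : a ∈ E₀}`. -/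
def R0minus (K : Type) [Field K] : Set (Matrix (Fin 2) (Fin 2) (GrassmannE K)) :=
  {x | ∃ a ∈ E0 K, x = !![a, 0; 0, -a]}

/-- `R₁⁺ = {b·e₁₂ : b ∈ E₁}`. -/
def R1plus (K : Type) [Field K] : Set (Matrix (Fin 2) (Fin 2) (GrassmannE K)) :=
  {x | ∃ b ∈ E1 K, x = !![0, b; 0, 0]}

/-- `R₁⁻ = {c·e₂₁ : c ∈ E₁}`. -/
def R1minus (K : Type) [Field K] : Set (Matrix (Fin 2) (Fin 2) (GrassmannE K)) :=
  {x | ∃ c ∈ E1 K, x = !![0, 0; c, 0]}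

section AntiComm

variable {K : Type} [Field K] {M : Type} [AddCommGroup M] [Module K M]

lemma odd_anticomm (b c : CliffordAlgebra (0 : QuadraticForm K M))
    (hb : b ∈ CliffordAlgebra.evenOdd (0 : QuadraticForm K M) 1)
    (hc : c ∈ CliffordAlgebra.evenOdd (0 : QuadraticForm K M) 1) :
    b * c = -(c * b) := by
  have base : ∀ v w : M, CliffordAlgebra.ι (0 : QuadraticForm K M) v * CliffordAlgebra.ι (0 : QuadraticForm K M) w =
      -(CliffordAlgebra.ι (0 : QuadraticForm K M) w * CliffordAlgebra.ι (0 : QuadraticForm K M) v) := by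
    intro v w
    have h := CliffordAlgebra.ι_mul_ι_add_swap (Q := (0 : QuadraticForm K M)) v w
    have h0 : QuadraticMap.polar (⇑(0 : QuadraticForm K M)) v w = 0 := by simp [QuadraticMap.polar]
    rw [h0, map_zero] at h
    exact eq_neg_of_add_eq_zero_left h
  have step : ∀ v : M, ∀ c', c' ∈ CliffordAlgebra.evenOdd (0 : QuadraticForm K M) 1 →
      CliffordAlgebra.ι (0 : QuadraticForm K M) v * c' = -(c' * CliffordAlgebra.ι (0 : QuadraticForm K M) v) := by
    intro v c' hc'
    induction c', hc' using CliffordAlgebra.odd_induction with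
    | ι w => exact base v w
    | add x y hx hy ihx ihy => rw [mul_add, ihx, ihy, add_mul, neg_add]
    | ι_mul_ι_mul m₁ m₂ x hx ih =>
      simp only [mul_assoc]
      rw [← mul_assoc (CliffordAlgebra.ι (0 : QuadraticForm K M) v) (CliffordAlgebra.ι (0 : QuadraticForm K M) m₁), base v m₁]
      simp only [neg_mul, mul_assoc]
      rw [← mul_assoc (CliffordAlgebra.ι (0 : QuadraticForm K M) v) (CliffordAlgebra.ι (0 : QuadraticForm K M) m₂), base v m₂]
      simp only [neg_mul, mul_neg, neg_neg, mul_assoc]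
      rw [ih]
      simp only [mul_neg]
  induction b, hb using CliffordAlgebra.odd_induction with
  | ι v => exact step v c hc
  | add x y hx hy ihx ihy => rw [add_mul, ihx, ihy, mul_add, neg_add]
  | ι_mul_ι_mul m₁ m₂ x hx ih =>
    simp only [mul_assoc]
    rw [ih]
    simp only [mul_neg]
    rw [← mul_assoc (CliffordAlgebra.ι (0 : QuadraticForm K M) m₂) c x, step m₂ c hc]
    simp only [neg_mul, mul_neg, neg_neg, mul_assoc]
    rw [← mul_assoc (CliffordAlgebra.ι (0 : QuadraticForm K M) m₁) c, step m₁ c hc]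
    simp only [neg_mul, mul_assoc]

lemma odd_triple (b c d : CliffordAlgebra (0 : QuadraticForm K M))
    (hb : b ∈ CliffordAlgebra.evenOdd (0 : QuadraticForm K M) 1)
    (hc : c ∈ CliffordAlgebra.evenOdd (0 : QuadraticForm K M) 1)
    (hd : d ∈ CliffordAlgebra.evenOdd (0 : QuadraticForm K M) 1) :
    b * c * d = -(d * c * b) := by
  rw [mul_assoc, odd_anticomm c d hc hd, mul_neg, ← mul_assoc,
    odd_anticomm b d hb hd, neg_mul, neg_neg, mul_assoc,
    odd_anticomm b c hb hc, mul_neg, ← mul_assoc]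

end AntiComm

/-- in `R = (M_{1,1}(E), *)`, for symmetric degree-1 elements `u₁, u₂` and a skew
degree-1 element `w`, `u₁ w u₂ + u₂ w u₁ = 0`; dually for `w₁, w₂` skew and `u` symmetric. -/
theorem alternating_identities (K : Type) [Field K] [CharZero K] :
    (∀ u₁ ∈ R1plus K, ∀ u₂ ∈ R1plus K, ∀ w ∈ R1minus K,
      u₁ * w * u₂ + u₂ * w * u₁ = 0) ∧
    (∀ w₁ ∈ R1minus K, ∀ w₂ ∈ R1minus K, ∀ u ∈ R1plus K,
      w₁ * u * w₂ + w₂ * u * w₁ = 0) := by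
  constructor
  · rintro _ ⟨b₁, hb₁, rfl⟩ _ ⟨b₂, hb₂, rfl⟩ _ ⟨c, hc, rfl⟩
    have h := odd_triple b₁ c b₂ hb₁ hc hb₂
    ext i j
    fin_cases i <;> fin_cases j <;>
      simp [Matrix.mul_apply, Fin.sum_univ_two, h]
  · rintro _ ⟨c₁, hc₁, rfl⟩ _ ⟨c₂, hc₂, rfl⟩ _ ⟨b, hb, rfl⟩
    have h := odd_triple c₁ b c₂ hc₁ hb hc₂
    ext i j
    fin_cases i <;> fin_cases j <;>
      simp [Matrix.mul_apply, Fin.sum_univ_two, h]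
end
end

section
/- Let R = (M_{1,1}(E), *). For all v, v' ∈ R_0^- and u, u' ∈ R_1^+, one has (vu − uv)(v'u' − u'v') = 0, i.e. the identity [z_0, y_1][z_0', y_1'] = 0 holds in R. -/
noncomputable section

open Matrix

lemma aux_comm {α : Type} [Ring α] (a b : α) :
    !![a, 0; 0, -a] * !![0, b; 0, 0] - !![0, b; 0, 0] * !![a, 0; 0, -a]
      = !![0, a * b + b * a; 0, 0] := by
  rw [Matrix.mul_fin_two, Matrix.mul_fin_two]
  ext i j
  fin_cases i <;> fin_cases j <;> simp

lemma aux_zero {α : Type} [Ring α] (x y : α) :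
    !![(0:α), x; 0, 0] * !![0, y; 0, 0] = 0 := by
  rw [Matrix.mul_fin_two]
  ext i j
  fin_cases i <;> fin_cases j <;> simp

/-- in `R = (M_{1,1}(E), *)`, the graded `*`-identity
`[z₀, y₁][z₀', y₁'] = 0` holds: for all `v, v' ∈ R₀⁻` and `u, u' ∈ R₁⁺`,
`(vu - uv)(v'u' - u'v') = 0`. -/
theorem commutator_product_identity (K : Type) [Field K] [CharZero K] :
    ∀ v ∈ R0minus K, ∀ v' ∈ R0minus K, ∀ u ∈ R1plus K, ∀ u' ∈ R1plus K,
      (v * u - u * v) * (v' * u' - u' * v') = 0 := by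
  rintro v ⟨a, -, rfl⟩ v' ⟨a', -, rfl⟩ u ⟨b, -, rfl⟩ u' ⟨b', -, rfl⟩
  rw [aux_comm, aux_comm, aux_zero]
end
end
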